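/- arXiv:2311.02295 — 2 statements merged into one kernel-verified Lean document; each statement's English description precedes it below -/
import Mathlib

section
/- Let α be a nonzero complex number and (t_n)_{n∈ℤ} a sequence of positive real numbers such that both (t_n) and (1/t_n) are bounded, and let T = T(t_n, α) be the associated bounded block-shift operator on H ⊕ H. Suppose that: (1) there exists i₀ ∈ ℤ such that for all m, n ∈ ℤ the equality t_n² + 1/t_n² = t_m² + 1/t_m² holds only when m = n or m = −(n + i₀); and (2) for every n ∈ ℤ, t_n ≠ 1 and t_n·t_{n−1} ≠ 1. Then T is irreducible. -/
noncomputable section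

open Complex Metric

/-- `ℓ²(ℤ)` over `ℂ`. -/
abbrev Hl : Type := lp (fun _ : ℤ => ℂ) 2

/-- The standard orthonormal basis of `ℓ²(ℤ)`. -/
def eb (n : ℤ) : Hl := lp.single 2 n 1

/-- The Hilbert space direct sum `H ⊕ H`. -/
abbrev H2 : Type := WithLp 2 (Hl × Hl)

/-- A bounded operator on a Hilbert space is irreducible if the only closed subspaces
invariant under both it and its adjoint are `⊥` and `⊤`. -/
def IsIrreducibleOp {E : Type*} [NormedAddCommGroup E] [InnerProductSpace ℂ E] [CompleteSpace E]
    (A : E →L[ℂ] E) : Prop :=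
  ∀ K : Submodule ℂ E, IsClosed (K : Set E) →
    (∀ x ∈ K, A x ∈ K) → (∀ x ∈ K, ContinuousLinearMap.adjoint A x ∈ K) →
    K = ⊥ ∨ K = ⊤

/-- The block operator `(x, y) ↦ (T₀ x + (X T₁ − T₀ X) y, T₁ y)` on the Hilbert space
direct sum `H₀ ⊕ H₁`. -/
def blockT2 {H0 H1 : Type*} [NormedAddCommGroup H0] [NormedSpace ℂ H0]
    [NormedAddCommGroup H1] [NormedSpace ℂ H1]
    (T0 : H0 →L[ℂ] H0) (T1 : H1 →L[ℂ] H1) (X : H1 →L[ℂ] H0) :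
    WithLp 2 (H0 × H1) →L[ℂ] WithLp 2 (H0 × H1) :=
  let E := WithLp.prodContinuousLinearEquiv 2 ℂ H0 H1
  (E.symm.toContinuousLinearMap).comp
    ((((T0.comp (ContinuousLinearMap.fst ℂ H0 H1)) +
        ((X.comp T1 - T0.comp X).comp (ContinuousLinearMap.snd ℂ H0 H1))).prod
      (T1.comp (ContinuousLinearMap.snd ℂ H0 H1))).comp E.toContinuousLinearMap)

/-- The block operator `T(wₙ, vₙ, dₙ)` on `ℓ²(ℤ) ⊕ ℓ²(ℤ)`. -/
def blockT (T0 T1 X : Hl →L[ℂ] Hl) : H2 →L[ℂ] H2 := blockT2 T0 T1 X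

/-!
Put `b (n, 0) = (eₙ, 0)` and `b (n, 1) = (0, eₙ)`. Then `T` maps the `n`-th block
`span {b (n, 0), b (n, 1)}` to the `(n + 1)`-st one by the matrix
`Aₙ = !![tₙ, α (tₙ⁻¹ - tₙ); 0, tₙ⁻¹]` of determinant one, so `T*T` and `TT*` are block diagonal
with blocks `Aₙᴴ Aₙ` and `Aₙ₋₁ Aₙ₋₁ᴴ`, whose traces are increasing functions of
`tₙ² + tₙ⁻²` and `tₙ₋₁² + tₙ₋₁⁻²`. If `Q` commutes with `T` and `T*`, its `2 × 2` blocks `Pₘₙ`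
intertwine these block matrices. By Cayley–Hamilton, two matrices of determinant one and different
traces admit no nonzero intertwiner, and hypothesis (1) ensures that for `m ≠ n` one of the two
pairs of traces differs, so `Pₘₙ = 0`. Hypothesis (2) makes `Aₙᴴ Aₙ` and `Aₙ₋₁ Aₙ₋₁ᴴ`
non-commuting, so `Pₙₙ` is scalar, and `QT = TQ` makes the scalar independent of `n`. Thus `Q`
is a scalar; applied to the projection onto a reducing subspace this gives irreducibility.
-/

open Matrix
open scoped InnerProductSpace

open ContinuousLinearMap in
theorem isIrreducibleOp_of_commute_eq_smul_one {E : Type*} [NormedAddCommGroup E]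
    [InnerProductSpace ℂ E] [CompleteSpace E] {A : E →L[ℂ] E}
    (h : ∀ Q : E →L[ℂ] E, Commute Q A → Commute Q (adjoint A) → ∃ c : ℂ, Q = c • 1) :
    IsIrreducibleOp A := by
  intro K hK hA hA'
  have : K.HasOrthogonalProjection := by
    have := hK.completeSpace_coe; infer_instance
  have hcomm (B : E →L[ℂ] E) (hB : ∀ x ∈ K, B x ∈ K) (hB' : ∀ x ∈ K, adjoint B x ∈ K) :
      Commute K.starProjection B := by
    refine K.isIdempotentElem_starProjection.commute_iff.mpr ⟨?_, ?_⟩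
    · rw [K.range_starProjection]; exact hB
    · rw [K.ker_starProjection]; exact orthogonal_mem_invtSubmodule hB'
  obtain ⟨c, hc⟩ := h _ (hcomm A hA hA') (hcomm _ hA' (by simpa using hA))
  rw [or_iff_not_imp_left, ← ne_eq, Submodule.ne_bot_iff]
  rintro ⟨x, hxK, hx⟩
  have hc1 : c = 1 := by
    have hcx : c • x = (1 : ℂ) • x := by
      simpa [hc] using K.starProjection_eq_self_iff.mpr hxK
    exact smul_left_injective ℂ hx hcx
  rw [eq_top_iff]
  intro y _
  simp [← K.starProjection_eq_self_iff, hc, hc1]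

namespace Matrix

variable {K : Type*} [Field K]

theorem sq_eq_trace_smul_sub_det_smul_one (M : Matrix (Fin 2) (Fin 2) K) :
    M ^ 2 = M.trace • M - M.det • 1 := by
  have h := M.aeval_self_charpoly
  rw [charpoly_fin_two] at h
  simp only [map_add, map_sub, map_pow, Polynomial.aeval_X, map_mul, Polynomial.aeval_C,
    Algebra.algebraMap_eq_smul_one, smul_mul_assoc, one_mul] at h
  rw [← sub_eq_zero, ← h]; abel

theorem eq_zero_of_mul_eq_mul_of_trace_ne {M N Q : Matrix (Fin 2) (Fin 2) K}
    (hM : M.det = 1) (hN : N.det = 1) (htr : M.trace ≠ N.trace) (hQ : Q * N = M * Q) :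
    Q = 0 := by
  have hQ2 : Q * N ^ 2 = M ^ 2 * Q := by
    rw [sq, sq, ← mul_assoc, hQ, mul_assoc, hQ, mul_assoc]
  rw [sq_eq_trace_smul_sub_det_smul_one, sq_eq_trace_smul_sub_det_smul_one, hM, hN,
    mul_sub, sub_mul, mul_smul_comm, smul_mul_assoc, hQ] at hQ2
  have hMQ : (M.trace - N.trace) • (M * Q) = 0 := by
    rw [sub_smul]; simpa [sub_eq_zero] using hQ2.symm
  have hMQ0 : M * Q = 0 := (smul_eq_zero.mp hMQ).resolve_left (sub_ne_zero.mpr htr)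
  have hMu : IsUnit M := (isUnit_iff_isUnit_det M).mpr (by rw [hM]; exact isUnit_one)
  exact (hMu.mul_right_eq_zero).mp hMQ0

theorem eq_smul_one_of_commute {M N Q : Matrix (Fin 2) (Fin 2) K} (hM : M 0 1 ≠ 0)
    (hMN : (M * N - N * M) 0 1 ≠ 0) (hQM : Commute Q M) (hQN : Commute Q N) :
    Q = Q 0 0 • 1 := by
  have entry {A B : Matrix (Fin 2) (Fin 2) K} (h : Commute A B) (i j : Fin 2) :=
    congrFun (congrFun h.eq i) j
  have m00 := entry hQM 0 0
  have m01 := entry hQM 0 1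
  have n01 := entry hQN 0 1
  simp only [mul_apply, Fin.sum_univ_two, sub_apply] at m00 m01 n01 hMN
  have hQ01 : Q 0 1 = 0 := by
    refine (mul_eq_zero.mp ?_).resolve_right hMN
    linear_combination M 0 1 * n01 - N 0 1 * m01
  have hQ10 : Q 1 0 = 0 := by
    refine (mul_eq_zero.mp ?_).resolve_left hM
    linear_combination -m00 + M 1 0 * hQ01
  have hQ11 : Q 1 1 = Q 0 0 := by
    have h : M 0 1 * (Q 0 0 - Q 1 1) = 0 := by linear_combination m01 + (M 0 0 - M 1 1) * hQ01
    linear_combination -((mul_eq_zero.mp h).resolve_left hM)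
  ext i j
  fin_cases i <;> fin_cases j <;> simp [hQ01, hQ10, hQ11]

variable [StarRing K] {A : ℤ → Matrix (Fin 2) (Fin 2) K} {P : ℤ → ℤ → Matrix (Fin 2) (Fin 2) K}
  (hP : ∀ m n, P (m + 1) (n + 1) * A n = A m * P m n)
  (hP' : ∀ m n, P m n * (A n)ᴴ = (A m)ᴴ * P (m + 1) (n + 1))
include hP hP'

theorem mul_conjTranspose_mul_eq (m n : ℤ) :
    P m n * ((A n)ᴴ * A n) = (A m)ᴴ * A m * P m n := by
  rw [← mul_assoc, hP', mul_assoc, hP, mul_assoc]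

theorem mul_mul_conjTranspose_eq (m n : ℤ) :
    P (m + 1) (n + 1) * (A n * (A n)ᴴ) = A m * (A m)ᴴ * P (m + 1) (n + 1) := by
  rw [← mul_assoc, hP, mul_assoc, hP', mul_assoc]

theorem eq_zero_of_intertwining_of_ne (hdet : ∀ n, (A n).det = 1)
    (htrace : ∀ m n, m ≠ n → ((A m)ᴴ * A m).trace = ((A n)ᴴ * A n).trace →
      ((A (m - 1))ᴴ * A (m - 1)).trace ≠ ((A (n - 1))ᴴ * A (n - 1)).trace)
    {m n : ℤ} (hmn : m ≠ n) : P m n = 0 := by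
  have det_gram (k : ℤ) : ((A k)ᴴ * A k).det = 1 := by simp [det_conjTranspose, hdet]
  have det_cogram (k : ℤ) : (A k * (A k)ᴴ).det = 1 := by simp [det_conjTranspose, hdet]
  by_cases h : ((A m)ᴴ * A m).trace = ((A n)ᴴ * A n).trace
  · have hK := mul_mul_conjTranspose_eq hP hP' (m - 1) (n - 1)
    rw [sub_add_cancel, sub_add_cancel] at hK
    refine eq_zero_of_mul_eq_mul_of_trace_ne (det_cogram _) (det_cogram _) ?_ hK
    rw [trace_mul_comm, trace_mul_comm (A (n - 1))]
    exact htrace m n hmn h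
  · exact eq_zero_of_mul_eq_mul_of_trace_ne (det_gram m) (det_gram n) h
      (mul_conjTranspose_mul_eq hP hP' m n)

theorem exists_eq_ite_smul_one_of_intertwining (hdet : ∀ n, (A n).det = 1)
    (htrace : ∀ m n, m ≠ n → ((A m)ᴴ * A m).trace = ((A n)ᴴ * A n).trace →
      ((A (m - 1))ᴴ * A (m - 1)).trace ≠ ((A (n - 1))ᴴ * A (n - 1)).trace)
    (hentry : ∀ n, ((A n)ᴴ * A n) 0 1 ≠ 0)
    (hcomm : ∀ n, ((A n)ᴴ * A n * (A (n - 1) * (A (n - 1))ᴴ) -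
      A (n - 1) * (A (n - 1))ᴴ * ((A n)ᴴ * A n)) 0 1 ≠ 0) :
    ∃ c : K, ∀ m n, P m n = if m = n then c • 1 else 0 := by
  have hdiag (n : ℤ) : P n n = P n n 0 0 • 1 := by
    have hK := mul_mul_conjTranspose_eq hP hP' (n - 1) (n - 1)
    rw [sub_add_cancel] at hK
    exact eq_smul_one_of_commute (hentry n) (hcomm n) (mul_conjTranspose_mul_eq hP hP' n n) hK
  have hstep (n : ℤ) : P (n + 1) (n + 1) 0 0 = P n n 0 0 := by
    have h := hP n n
    rw [hdiag (n + 1), hdiag n, smul_mul_assoc, one_mul, mul_smul_comm, mul_one] at h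
    have hA : A n ≠ 0 := fun h0 => by simpa [h0] using hdet n
    exact smul_left_injective K hA h
  have hconst (n : ℤ) : P n n 0 0 = P 0 0 0 0 := by
    induction n using Int.induction_on with
    | zero => rfl
    | succ k ih => rw [hstep, ih]
    | pred k ih => rw [← ih, ← hstep, sub_add_cancel]
  refine ⟨P 0 0 0 0, fun m n => ?_⟩
  split_ifs with h
  · rw [h, hdiag, hconst]
  · exact eq_zero_of_intertwining_of_ne hP hP' hdet htrace h

end Matrix

namespace HilbertBasis

open ContinuousLinearMap

variable {𝕜 E : Type*} [RCLike 𝕜] [NormedAddCommGroup E] [InnerProductSpace 𝕜 E]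
  (b : HilbertBasis (ℤ × Fin 2) 𝕜 E)

def blockMatrix (Q : E →L[𝕜] E) (m n : ℤ) : Matrix (Fin 2) (Fin 2) 𝕜 :=
  Matrix.of fun i j => ⟪b (m, i), Q (b (n, j))⟫_𝕜

theorem eq_of_forall_inner_eq {x y : E} (h : ∀ p, ⟪b p, x⟫_𝕜 = ⟪b p, y⟫_𝕜) : x = y :=
  b.repr.injective <| lp.ext <| funext fun p => by simp only [b.repr_apply_apply, h]

theorem inner_sum_smul (m n : ℤ) (i : Fin 2) (c : Fin 2 → 𝕜) :
    ⟪b (m, i), ∑ k, c k • b (n, k)⟫_𝕜 = if m = n then c i else 0 := by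
  simp only [inner_sum, inner_smul_right, orthonormal_iff_ite.mp b.orthonormal, Prod.mk.injEq,
    mul_ite, mul_one, mul_zero]
  split_ifs with h <;> simp [h]

variable {b}

theorem eq_smul_one_of_blockMatrix_eq {Q : E →L[𝕜] E} {c : 𝕜}
    (hQ : ∀ m n, b.blockMatrix Q m n = if m = n then c • 1 else 0) : Q = c • 1 := by
  refine ext_on (Submodule.dense_iff_topologicalClosure_eq_top.mpr b.dense_span) ?_
  rintro _ ⟨⟨n, j⟩, rfl⟩
  refine b.eq_of_forall_inner_eq fun ⟨m, i⟩ => ?_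
  have h := congrFun (congrFun (hQ m n) i) j
  simp only [blockMatrix, of_apply] at h
  rw [h, _root_.smul_apply, one_apply_eq_self, inner_smul_right,
    orthonormal_iff_ite.mp b.orthonormal]
  split_ifs <;> simp_all [Matrix.one_apply]

variable [CompleteSpace E] {T : E →L[𝕜] E} {A : ℤ → Matrix (Fin 2) (Fin 2) 𝕜}
  (hT : ∀ n j, T (b (n, j)) = ∑ i, A n i j • b (n + 1, i))
include hT

theorem adjoint_apply_succ (n : ℤ) (i : Fin 2) :
    adjoint T (b (n + 1, i)) = ∑ k, star (A n i k) • b (n, k) := by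
  refine b.eq_of_forall_inner_eq fun ⟨m, j⟩ => ?_
  rw [adjoint_inner_right, hT, ← inner_conj_symm, inner_sum_smul, inner_sum_smul]
  split_ifs <;> simp_all

theorem blockMatrix_succ_mul_eq_mul_blockMatrix {Q : E →L[𝕜] E} (hQ : Commute Q T) (m n : ℤ) :
    b.blockMatrix Q (m + 1) (n + 1) * A n = A m * b.blockMatrix Q m n := by
  ext i j
  have h := congrArg (fun S : E →L[𝕜] E => ⟪b (m + 1, i), S (b (n, j))⟫_𝕜) hQ.eq
  simp only [mul_apply_eq_comp, hT, map_sum, map_smul, inner_sum, inner_smul_right,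
    ← adjoint_inner_left T, adjoint_apply_succ hT, sum_inner, inner_smul_left,
    RCLike.star_def, RCLike.conj_conj] at h
  simpa [blockMatrix, Matrix.mul_apply, mul_comm] using h

theorem blockMatrix_mul_conjTranspose_eq {Q : E →L[𝕜] E} (hQ : Commute Q (adjoint T))
    (m n : ℤ) : b.blockMatrix Q m n * (A n)ᴴ = (A m)ᴴ * b.blockMatrix Q (m + 1) (n + 1) := by
  ext i j
  have h := congrArg (fun S : E →L[𝕜] E => ⟪b (m, i), S (b (n + 1, j))⟫_𝕜) hQ.eq
  simp only [mul_apply_eq_comp, adjoint_apply_succ hT, map_sum, map_smul, inner_sum,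
    inner_smul_right, adjoint_inner_right, hT, sum_inner, inner_smul_left] at h
  simpa [blockMatrix, Matrix.mul_apply, mul_comm] using h

end HilbertBasis

theorem apply_sub_one_ne_of_apply_eq {β : Type*} {f : ℤ → β} {i₀ : ℤ}
    (hf : ∀ m n, f n = f m → m = n ∨ m = -(n + i₀)) {m n : ℤ} (hmn : m ≠ n) (h : f m = f n) :
    f (m - 1) ≠ f (n - 1) := fun h' => by
  rcases hf m n h.symm, hf (m - 1) (n - 1) h'.symm with ⟨_ | _, _ | _⟩ <;> omega

def shiftMatrix (u : ℝ) (α : ℂ) : Matrix (Fin 2) (Fin 2) ℂ :=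
  !![(u : ℂ), α * ((u : ℂ)⁻¹ - u); 0, (u : ℂ)⁻¹]

section shiftMatrix

variable {u v : ℝ} (α : ℂ)

theorem det_shiftMatrix (hu : u ≠ 0) : (shiftMatrix u α).det = 1 := by
  simp [shiftMatrix, det_fin_two, hu]

theorem trace_conjTranspose_mul_shiftMatrix (hu : u ≠ 0) :
    ((shiftMatrix u α)ᴴ * shiftMatrix u α).trace =
      (((1 + normSq α) * (u ^ 2 + (u ^ 2)⁻¹) - 2 * normSq α : ℝ) : ℂ) := by
  simp [shiftMatrix, trace_fin_two, Matrix.mul_apply, Fin.sum_univ_two]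
  have hu' : (u : ℂ) ≠ 0 := ofReal_ne_zero.mpr hu
  rw [normSq_eq_conj_mul_self]
  field_simp
  ring

theorem conjTranspose_mul_shiftMatrix_zero_one_ne_zero (hu : 0 < u) (hu1 : u ≠ 1) (hα : α ≠ 0) :
    ((shiftMatrix u α)ᴴ * shiftMatrix u α) 0 1 ≠ 0 := by
  simp [shiftMatrix, Matrix.mul_apply, Fin.sum_univ_two]
  refine ⟨hu.ne', hα, fun h => hu1 ?_⟩
  have h' : u⁻¹ = u := by exact_mod_cast sub_eq_zero.mp h
  rw [← pow_eq_one_iff_of_nonneg hu.le two_ne_zero]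
  field_simp at h'
  exact h'.symm

theorem commutator_conjTranspose_mul_shiftMatrix_zero_one (hu : u ≠ 0) (hv : v ≠ 0) :
    ((shiftMatrix u α)ᴴ * shiftMatrix u α * (shiftMatrix v α * (shiftMatrix v α)ᴴ) -
      shiftMatrix v α * (shiftMatrix v α)ᴴ * ((shiftMatrix u α)ᴴ * shiftMatrix u α)) 0 1 =
      α * (((1 + normSq α) * (u ^ 2 - 1) * (v ^ 2 - 1) * (u ^ 2 * v ^ 2 - 1) /
        (u ^ 2 * v ^ 2) : ℝ) : ℂ) := by
  simp only [Matrix.sub_apply, Matrix.mul_apply, Fin.sum_univ_two, conjTranspose_apply]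
  simp [shiftMatrix]
  have hu' : (u : ℂ) ≠ 0 := ofReal_ne_zero.mpr hu
  have hv' : (v : ℂ) ≠ 0 := ofReal_ne_zero.mpr hv
  rw [normSq_eq_conj_mul_self]
  field_simp
  ring

theorem commutator_conjTranspose_mul_shiftMatrix_zero_one_ne_zero (hu : 0 < u) (hv : 0 < v)
    (hu1 : u ≠ 1) (hv1 : v ≠ 1) (huv : u * v ≠ 1) (hα : α ≠ 0) :
    ((shiftMatrix u α)ᴴ * shiftMatrix u α * (shiftMatrix v α * (shiftMatrix v α)ᴴ) -
      shiftMatrix v α * (shiftMatrix v α)ᴴ * ((shiftMatrix u α)ᴴ * shiftMatrix u α)) 0 1 ≠ 0 := by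
  have sq_sub_one_ne_zero {w : ℝ} (hw : 0 < w) (hw1 : w ≠ 1) : w ^ 2 - 1 ≠ 0 :=
    sub_ne_zero.mpr ((pow_eq_one_iff_of_nonneg hw.le two_ne_zero).not.mpr hw1)
  have huv' := sq_sub_one_ne_zero (mul_pos hu hv) huv
  rw [mul_pow] at huv'
  rw [commutator_conjTranspose_mul_shiftMatrix_zero_one α hu.ne' hv.ne']
  refine mul_ne_zero hα (ofReal_ne_zero.mpr (div_ne_zero ?_ (by positivity)))
  exact mul_ne_zero (mul_ne_zero (mul_ne_zero (add_pos_of_pos_of_nonneg one_pos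
    (normSq_nonneg α)).ne' (sq_sub_one_ne_zero hu hu1))
    (sq_sub_one_ne_zero hv hv1)) huv'

end shiftMatrix

theorem inner_eb_left (n : ℤ) (x : Hl) : ⟪eb n, x⟫_ℂ = x n := by
  simp [eb, lp.inner_single_left]

def blockBasisFun (p : ℤ × Fin 2) : H2 := WithLp.toLp 2 (![(eb p.1, 0), (0, eb p.1)] p.2)

theorem inner_blockBasisFun_left (p : ℤ × Fin 2) (x : H2) :
    ⟪blockBasisFun p, x⟫_ℂ = ![x.fst p.1, x.snd p.1] p.2 := by
  obtain ⟨n, i⟩ := p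
  fin_cases i <;> simp [blockBasisFun, WithLp.prod_inner_apply, inner_eb_left]

theorem orthonormal_blockBasisFun : Orthonormal ℂ blockBasisFun := by
  rw [orthonormal_iff_ite]
  rintro p ⟨n, j⟩
  rw [inner_blockBasisFun_left]
  obtain ⟨m, i⟩ := p
  fin_cases i <;> fin_cases j <;> simp [blockBasisFun, eb, Pi.single_apply, eq_comm]

theorem orthogonal_span_blockBasisFun :
    (Submodule.span ℂ (Set.range blockBasisFun))ᗮ = ⊥ := by
  rw [Submodule.eq_bot_iff]
  intro x hx
  have h (p) : ⟪blockBasisFun p, x⟫_ℂ = 0 :=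
    (Submodule.mem_orthogonal _ x).mp hx _ (Submodule.subset_span ⟨p, rfl⟩)
  simp only [inner_blockBasisFun_left, Prod.forall, Fin.forall_fin_two] at h
  have hfst : x.fst = 0 := lp.ext <| funext fun n => (h n).1
  have hsnd : x.snd = 0 := lp.ext <| funext fun n => (h n).2
  exact WithLp.ofLp_injective 2 (Prod.ext hfst hsnd)

def blockBasis : HilbertBasis (ℤ × Fin 2) ℂ H2 :=
  HilbertBasis.mkOfOrthogonalEqBot orthonormal_blockBasisFun orthogonal_span_blockBasisFun

theorem blockT_apply (T0 T1 X : Hl →L[ℂ] Hl) (x : H2) :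
    blockT T0 T1 X x = WithLp.toLp 2 (T0 x.fst + (X (T1 x.snd) - T0 (X x.snd)), T1 x.snd) :=
  rfl

theorem blockT_blockBasis {t : ℤ → ℝ} {α : ℂ} {T0 T1 X : Hl →L[ℂ] Hl}
    (hT0 : ∀ n : ℤ, T0 (eb n) = (t n : ℂ) • eb (n + 1))
    (hT1 : ∀ n : ℤ, T1 (eb n) = ((t n : ℂ))⁻¹ • eb (n + 1))
    (hX : ∀ n : ℤ, X (eb n) = α • eb n) (n : ℤ) (j : Fin 2) :
    blockT T0 T1 X (blockBasis (n, j)) = ∑ i, shiftMatrix (t n) α i j • blockBasis (n + 1, i) := by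
  simp only [blockBasis, HilbertBasis.coe_mkOfOrthogonalEqBot, blockT_apply, blockBasisFun,
    ← WithLp.toLp_smul, ← WithLp.toLp_add, Fin.sum_univ_two]
  congr 1
  fin_cases j <;> ext1 <;> simp [shiftMatrix, hT0, hT1, hX]
  module

theorem irreducibility_of_T_t_alpha_general
    (t : ℤ → ℝ) (htpos : ∀ n, 0 < t n)
    (α : ℂ) (hα : α ≠ 0)
    (T0 T1 X : Hl →L[ℂ] Hl)
    (hT0 : ∀ n : ℤ, T0 (eb n) = (t n : ℂ) • eb (n + 1))
    (hT1 : ∀ n : ℤ, T1 (eb n) = ((t n : ℂ))⁻¹ • eb (n + 1))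
    (hX : ∀ n : ℤ, X (eb n) = α • eb n)
    (h1 : ∃ i0 : ℤ, ∀ m n : ℤ,
      (t n) ^ 2 + ((t n) ^ 2)⁻¹ = (t m) ^ 2 + ((t m) ^ 2)⁻¹ → m = n ∨ m = -(n + i0))
    (h2 : ∀ n : ℤ, t n ≠ 1 ∧ t n * t (n - 1) ≠ 1) :
    IsIrreducibleOp (blockT T0 T1 X) := by
  obtain ⟨i0, h1⟩ := h1
  have hT := blockT_blockBasis hT0 hT1 hX
  have htrace (m n : ℤ) (h : ((shiftMatrix (t n) α)ᴴ * shiftMatrix (t n) α).trace =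
      ((shiftMatrix (t m) α)ᴴ * shiftMatrix (t m) α).trace) : m = n ∨ m = -(n + i0) := by
    rw [trace_conjTranspose_mul_shiftMatrix α (htpos n).ne',
      trace_conjTranspose_mul_shiftMatrix α (htpos m).ne', ofReal_inj] at h
    exact h1 m n <| mul_left_cancel₀ (add_pos_of_pos_of_nonneg one_pos (normSq_nonneg α)).ne'
      (by linarith)
  refine isIrreducibleOp_of_commute_eq_smul_one fun Q hQ hQ' => ?_
  obtain ⟨c, hc⟩ := Matrix.exists_eq_ite_smul_one_of_intertwining
    (HilbertBasis.blockMatrix_succ_mul_eq_mul_blockMatrix hT hQ)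
    (HilbertBasis.blockMatrix_mul_conjTranspose_eq hT hQ')
    (fun n => det_shiftMatrix α (htpos n).ne')
    (fun m n => apply_sub_one_ne_of_apply_eq htrace)
    (fun n => conjTranspose_mul_shiftMatrix_zero_one_ne_zero α (htpos n) (h2 n).1 hα)
    (fun n => commutator_conjTranspose_mul_shiftMatrix_zero_one_ne_zero α (htpos n)
      (htpos (n - 1)) (h2 n).1 (h2 (n - 1)).1 (h2 n).2 hα)
  exact ⟨c, HilbertBasis.eq_smul_one_of_blockMatrix_eq hc⟩

/-- Proposition 3.1: irreducibility of `T(tₙ, α)`. -/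
theorem irreducibility_of_T_t_alpha
    (t : ℤ → ℝ) (htpos : ∀ n, 0 < t n)
    (htb : ∃ C : ℝ, ∀ n, t n ≤ C) (htb' : ∃ C : ℝ, ∀ n, (t n)⁻¹ ≤ C)
    (α : ℂ) (hα : α ≠ 0)
    (T0 T1 X : Hl →L[ℂ] Hl)
    (hT0 : ∀ n : ℤ, T0 (eb n) = (t n : ℂ) • eb (n + 1))
    (hT1 : ∀ n : ℤ, T1 (eb n) = ((t n : ℂ))⁻¹ • eb (n + 1))
    (hX : ∀ n : ℤ, X (eb n) = α • eb n)
    (hXT : X.comp T1 ≠ T0.comp X)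
    (h1 : ∃ i0 : ℤ, ∀ m n : ℤ,
      (t n) ^ 2 + ((t n) ^ 2)⁻¹ = (t m) ^ 2 + ((t m) ^ 2)⁻¹ → m = n ∨ m = -(n + i0))
    (h2 : ∀ n : ℤ, t n ≠ 1 ∧ t n * t (n - 1) ≠ 1) :
    IsIrreducibleOp (blockT T0 T1 X) :=
  irreducibility_of_T_t_alpha_general t htpos α hα T0 T1 X hT0 hT1 hX h1 h2
end
end

section
/- Let (t_n)_{n∈ℤ} be a sequence of nonzero complex numbers with (t_n) and (1/t_n) bounded, let (d_n)_{n∈ℤ} be a bounded sequence of complex numbers with XT₁ ≠ T₀X, and let T = T(t_n, d_n) be the associated bounded block-shift operator on H ⊕ H. If both bilateral weighted shifts T₀ (with weights t_n) and T₁ (with weights 1/t_n) are irreducible and for every i ∈ ℤ one has lim_{k→∞} ∏_{m=0}^{k} |t_{i+m}| = 0, then T is irreducible. -/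
noncomputable section

open Complex Metric

/-!
A closed subspace invariant under `T` and `T*` is the range of a star projection `P` commuting
with `T`. The lower-left block `S` of `P` satisfies `S T₀ = T₁ S`, and comparing coordinates in
`T₁ᵏ S eₙ = S T₀ᵏ eₙ` gives `|(S eₙ)ₘ| ≤ ‖S‖ ∏_{j<k} |t_{n+j}| |t_{m+j}| → 0`, so `S = 0` and
`P = diag(Q₀, Q₁)`. Each `Qᵢ` is a star projection commuting with `Tᵢ`, hence `0` or `1`, and
`Q₀ (X T₁ − T₀ X) = (X T₁ − T₀ X) Q₁` with `X T₁ ≠ T₀ X` forces `Q₀ = Q₁`, i.e. `P = 0` or `P = 1`.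
-/

open Filter Topology ContinuousLinearMap

section IrreducibleOp

variable {E : Type*} [NormedAddCommGroup E] [InnerProductSpace ℂ E] [CompleteSpace E]
  {A : E →L[ℂ] E}

lemma commute_starProjection_of_forall_mem {K : Submodule ℂ E} [K.HasOrthogonalProjection]
    (hA : ∀ x ∈ K, A x ∈ K) (hA' : ∀ x ∈ K, adjoint A x ∈ K) :
    Commute K.starProjection A := by
  rw [K.isIdempotentElem_starProjection.commute_iff, K.range_starProjection,
    K.ker_starProjection]
  exact ⟨hA, orthogonal_mem_invtSubmodule hA'⟩

lemma IsIrreducibleOp.of_commute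
    (h : ∀ P : E →L[ℂ] E, IsStarProjection P → Commute P A → P = 0 ∨ P = 1) :
    IsIrreducibleOp A := by
  intro K hK hA hA'
  have : CompleteSpace K := hK.completeSpace_coe
  refine (h _ isStarProjection_starProjection
    (commute_starProjection_of_forall_mem hA hA')).imp (fun h0 => ?_) (fun h1 => ?_)
  · rw [← K.range_starProjection, h0]
    exact LinearMap.range_zero
  · rw [← K.range_starProjection, h1]
    exact LinearMap.range_id

lemma IsIrreducibleOp.eq_zero_or_eq_one (hA : IsIrreducibleOp A) {P : E →L[ℂ] E}
    (hP : IsStarProjection P) (hPA : Commute P A) : P = 0 ∨ P = 1 := by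
  obtain ⟨K, _, rfl⟩ := isStarProjection_iff_eq_starProjection.mp hP
  have hPA' : Commute K.starProjection (adjoint A) := by
    simpa [← star_eq_adjoint, hP.isSelfAdjoint.star_eq] using hPA.star_star
  have mem_of_commute : ∀ {B : E →L[ℂ] E}, Commute K.starProjection B → ∀ x ∈ K, B x ∈ K :=
    fun {B} hB x hx => by
      rw [← K.starProjection_eq_self_iff] at hx ⊢
      exact (DFunLike.congr_fun hB.eq x).trans (congrArg B hx)
  have hK : IsClosed (K : Set E) := by
    simpa using K.isIdempotentElem_starProjection.isClosed_range
  rcases hA K hK (mem_of_commute hPA) (mem_of_commute hPA') with rfl | rfl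
  · exact .inl Submodule.starProjection_bot
  · exact .inr Submodule.starProjection_top'

end IrreducibleOp

section WeightedShift

lemma ext_eb {F : Type*} [NormedAddCommGroup F] [NormedSpace ℂ F] {A B : Hl →L[ℂ] F}
    (h : ∀ n, A (eb n) = B (eb n)) : A = B :=
  lp.ext_continuousLinearMap ENNReal.ofNat_ne_top fun n => ContinuousLinearMap.ext_ring (h n)

lemma norm_eb (n : ℤ) : ‖eb n‖ = 1 := by
  simp [eb, lp.norm_single]

variable {c : ℤ → ℂ} {T : Hl →L[ℂ] Hl}

lemma weightedShift_apply_add_one (hT : ∀ n, T (eb n) = c n • eb (n + 1)) (y : Hl) (m : ℤ) :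
    T y (m + 1) = c m * y m := by
  have : lp.evalCLM ℂ (fun _ : ℤ => ℂ) 2 (m + 1) ∘L T = c m • lp.evalCLM ℂ _ 2 m := by
    refine ext_eb fun n => ?_
    rw [comp_apply, hT, smul_apply]
    rcases eq_or_ne m n with rfl | hmn
    · simp [eb, lp.evalCLM]
    · simp [eb, lp.evalCLM, lp.single_apply, hmn]
  exact DFunLike.congr_fun this y

lemma weightedShift_pow_apply_add (hT : ∀ n, T (eb n) = c n • eb (n + 1)) (k : ℕ) (y : Hl)
    (m : ℤ) : (T ^ k) y (m + k) = (∏ j ∈ Finset.range k, c (m + j)) * y m := by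
  induction k with
  | zero => simp
  | succ k ih =>
    rw [pow_succ', mul_apply_eq_comp, Nat.cast_succ, ← add_assoc,
      weightedShift_apply_add_one hT, ih, Finset.prod_range_succ]
    ring

lemma weightedShift_pow_apply_eb (hT : ∀ n, T (eb n) = c n • eb (n + 1)) (k : ℕ) (n : ℤ) :
    (T ^ k) (eb n) = (∏ j ∈ Finset.range k, c (n + j)) • eb (n + k) := by
  induction k with
  | zero => simp
  | succ k ih =>
    rw [pow_succ', mul_apply_eq_comp, ih, map_smul, hT, smul_smul,
      Finset.prod_range_succ]
    push_cast
    ring_nf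

lemma weightedShift_intertwiner_eq_zero {w v : ℤ → ℂ} {T0 T1 S : Hl →L[ℂ] Hl}
    (hT0 : ∀ n, T0 (eb n) = w n • eb (n + 1)) (hT1 : ∀ n, T1 (eb n) = v n • eb (n + 1))
    (hv : ∀ n, v n ≠ 0)
    (hwv : ∀ m n : ℤ, Tendsto (fun k : ℕ =>
      (∏ j ∈ Finset.range k, ‖w (n + j)‖) / ∏ j ∈ Finset.range k, ‖v (m + j)‖) atTop (𝓝 0))
    (hS : S ∘L T0 = T1 ∘L S) : S = 0 := by
  refine ext_eb fun n => lp.ext (funext fun m => ?_)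
  set y := S (eb n)
  have hbound : ∀ k : ℕ, ‖y m‖ ≤ ‖S‖ *
      ((∏ j ∈ Finset.range k, ‖w (n + j)‖) / ∏ j ∈ Finset.range k, ‖v (m + j)‖) := by
    intro k
    have hpos : 0 < ∏ j ∈ Finset.range k, ‖v (m + j)‖ :=
      Finset.prod_pos fun j _ => norm_pos_iff.mpr (hv _)
    rw [mul_div_assoc', le_div_iff₀ hpos]
    calc ‖y m‖ * ∏ j ∈ Finset.range k, ‖v (m + j)‖
        = ‖(T1 ^ k) y (m + k)‖ := by
          rw [weightedShift_pow_apply_add hT1, norm_mul, norm_prod, mul_comm]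
      _ ≤ ‖(T1 ^ k) y‖ := lp.norm_apply_le_norm two_ne_zero _ _
      _ = ‖S ((T0 ^ k) (eb n))‖ := by
          have hSk : S * T0 ^ k = T1 ^ k * S := SemiconjBy.pow_right hS k
          rw [← mul_apply_eq_comp, ← hSk, mul_apply_eq_comp]
      _ ≤ ‖S‖ * ∏ j ∈ Finset.range k, ‖w (n + j)‖ := by
          refine (S.le_opNorm _).trans_eq ?_
          rw [weightedShift_pow_apply_eb hT0, norm_smul, norm_eb, mul_one, norm_prod]
  have hlim := (hwv m n).const_mul ‖S‖
  rw [mul_zero] at hlim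
  simpa using ge_of_tendsto' hlim hbound

end WeightedShift

lemma WithLp.prod_ext {p : ENNReal} {α β : Type*} {z w : WithLp p (α × β)}
    (h0 : z.fst = w.fst) (h1 : z.snd = w.snd) : z = w :=
  WithLp.ofLp_injective p (Prod.ext h0 h1)

section BlockDiag

open WithLp

variable {H0 H1 : Type*} [NormedAddCommGroup H0] [NormedSpace ℂ H0]
  [NormedAddCommGroup H1] [NormedSpace ℂ H1]

def blockDiag (Q0 : H0 →L[ℂ] H0) (Q1 : H1 →L[ℂ] H1) :
    WithLp 2 (H0 × H1) →L[ℂ] WithLp 2 (H0 × H1) :=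
  (prodContinuousLinearEquiv 2 ℂ H0 H1).symm.toContinuousLinearMap ∘L Q0.prodMap Q1 ∘L
    (prodContinuousLinearEquiv 2 ℂ H0 H1).toContinuousLinearMap

@[simp]
lemma blockDiag_apply (Q0 : H0 →L[ℂ] H0) (Q1 : H1 →L[ℂ] H1) (z : WithLp 2 (H0 × H1)) :
    blockDiag Q0 Q1 z = toLp 2 (Q0 z.fst, Q1 z.snd) := rfl

lemma blockDiag_injective : Function.Injective2 (blockDiag (H0 := H0) (H1 := H1)) := by
  intro Q0 Q0' Q1 Q1' h
  have h' := fun z => DFunLike.congr_fun h z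
  exact ⟨ext fun x => by simpa using congrArg WithLp.fst (h' (toLp 2 (x, 0))),
    ext fun y => by simpa using congrArg WithLp.snd (h' (toLp 2 (0, y)))⟩

lemma blockDiag_mul (Q0 Q0' : H0 →L[ℂ] H0) (Q1 Q1' : H1 →L[ℂ] H1) :
    blockDiag (Q0 * Q0') (Q1 * Q1') = blockDiag Q0 Q1 * blockDiag Q0' Q1' := rfl

variable {T0 : H0 →L[ℂ] H0} {T1 : H1 →L[ℂ] H1} {X : H1 →L[ℂ] H0}

@[simp]
lemma blockT2_apply (z : WithLp 2 (H0 × H1)) :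
    blockT2 T0 T1 X z = toLp 2 (T0 z.fst + (X ∘L T1 - T0 ∘L X) z.snd, T1 z.snd) := rfl

lemma commute_of_commute_blockDiag_blockT2 {Q0 : H0 →L[ℂ] H0} {Q1 : H1 →L[ℂ] H1}
    (h : Commute (blockDiag Q0 Q1) (blockT2 T0 T1 X)) :
    Commute Q0 T0 ∧ Commute Q1 T1 ∧
      Q0 ∘L (X ∘L T1 - T0 ∘L X) = (X ∘L T1 - T0 ∘L X) ∘L Q1 := by
  have h' := fun z => DFunLike.congr_fun h.eq z
  refine ⟨ext fun x => ?_, ext fun y => ?_, ext fun y => ?_⟩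
  · simpa using congrArg WithLp.fst (h' (toLp 2 (x, 0)))
  · simpa using congrArg WithLp.snd (h' (toLp 2 (0, y)))
  · simpa using congrArg WithLp.fst (h' (toLp 2 (0, y)))

end BlockDiag

section BlockIrreducible

open WithLp

variable {H0 H1 : Type*} [NormedAddCommGroup H0] [InnerProductSpace ℂ H0] [CompleteSpace H0]
  [NormedAddCommGroup H1] [InnerProductSpace ℂ H1] [CompleteSpace H1]
  {T0 : H0 →L[ℂ] H0} {T1 : H1 →L[ℂ] H1} {X : H1 →L[ℂ] H0}

lemma adjoint_blockDiag (Q0 : H0 →L[ℂ] H0) (Q1 : H1 →L[ℂ] H1) :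
    adjoint (blockDiag Q0 Q1) = blockDiag (adjoint Q0) (adjoint Q1) :=
  ((eq_adjoint_iff _ _).mpr fun z w => by simp [adjoint_inner_left]).symm

lemma IsStarProjection.of_blockDiag {Q0 : H0 →L[ℂ] H0} {Q1 : H1 →L[ℂ] H1}
    (h : IsStarProjection (blockDiag Q0 Q1)) : IsStarProjection Q0 ∧ IsStarProjection Q1 := by
  have hidem := blockDiag_injective (h.isIdempotentElem.eq.symm.trans (blockDiag_mul ..).symm)
  have hsa := blockDiag_injective
    (h.isSelfAdjoint.star_eq.symm.trans ((star_eq_adjoint _).trans (adjoint_blockDiag ..)))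
  exact ⟨⟨hidem.1.symm, (star_eq_adjoint Q0).trans hsa.1.symm⟩,
    ⟨hidem.2.symm, (star_eq_adjoint Q1).trans hsa.2.symm⟩⟩

lemma exists_eq_blockDiag_of_commute_blockT2
    (hS : ∀ S : H0 →L[ℂ] H1, S ∘L T0 = T1 ∘L S → S = 0)
    {P : WithLp 2 (H0 × H1) →L[ℂ] WithLp 2 (H0 × H1)} (hP : IsSelfAdjoint P)
    (hPT : Commute P (blockT2 T0 T1 X)) : ∃ Q0 Q1, P = blockDiag Q0 Q1 := by
  let e := (prodContinuousLinearEquiv 2 ℂ H0 H1).symm.toContinuousLinearMap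
  let inl : H0 →L[ℂ] WithLp 2 (H0 × H1) := e ∘L ContinuousLinearMap.inl ℂ H0 H1
  let inr : H1 →L[ℂ] WithLp 2 (H0 × H1) := e ∘L ContinuousLinearMap.inr ℂ H0 H1
  have hPT' := fun z => DFunLike.congr_fun hPT.eq z
  have hlowerLeft : sndL 2 ℂ H0 H1 ∘L P ∘L inl = 0 :=
    hS _ (ext fun x => by simpa [inl, e] using congrArg WithLp.snd (hPT' (toLp 2 (x, 0))))
  have hsnd (x : H0) : (P (toLp 2 (x, 0))).snd = 0 := DFunLike.congr_fun hlowerLeft x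
  have hfst (y : H1) : (P (toLp 2 (0, y))).fst = 0 := by
    refine ext_inner_left ℂ fun x => ?_
    simpa [hsnd] using (hP.isSymmetric (toLp 2 (x, 0)) (toLp 2 (0, y))).symm
  refine ⟨fstL 2 ℂ H0 H1 ∘L P ∘L inl, sndL 2 ℂ H0 H1 ∘L P ∘L inr, ext fun z => ?_⟩
  have hz : z = toLp 2 (z.fst, 0) + toLp 2 (0, z.snd) := by
    rw [← toLp_add, Prod.mk_add_mk, add_zero, zero_add]; rfl
  rw [hz, map_add]
  refine WithLp.prod_ext ?_ ?_ <;> simp [inl, inr, e, hsnd, hfst]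

theorem isIrreducibleOp_blockT2 (h0 : IsIrreducibleOp T0) (h1 : IsIrreducibleOp T1)
    (hS : ∀ S : H0 →L[ℂ] H1, S ∘L T0 = T1 ∘L S → S = 0) (hXT : X ∘L T1 ≠ T0 ∘L X) :
    IsIrreducibleOp (blockT2 T0 T1 X) := by
  refine IsIrreducibleOp.of_commute fun P hP hPT => ?_
  obtain ⟨Q0, Q1, rfl⟩ := exists_eq_blockDiag_of_commute_blockT2 hS hP.isSelfAdjoint hPT
  obtain ⟨hQ0, hQ1⟩ := hP.of_blockDiag
  obtain ⟨hc0, hc1, hD⟩ := commute_of_commute_blockDiag_blockT2 hPT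
  have hD0 : X ∘L T1 - T0 ∘L X ≠ 0 := sub_ne_zero.mpr hXT
  rcases h0.eq_zero_or_eq_one hQ0 hc0 with rfl | rfl <;>
    rcases h1.eq_zero_or_eq_one hQ1 hc1 with rfl | rfl
  · exact .inl (ext fun z => rfl)
  · exact absurd (by simpa [one_def] using hD.symm) hD0
  · exact absurd (by simpa [one_def] using hD) hD0
  · exact .inr (ext fun z => rfl)

end BlockIrreducible

open Filter in
theorem irreducibility_of_T_t_d_of_prod_tendsto_zero_general
    (t : ℤ → ℂ) (ht0 : ∀ n, t n ≠ 0)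
    (T0 T1 X : Hl →L[ℂ] Hl)
    (hT0 : ∀ n : ℤ, T0 (eb n) = t n • eb (n + 1))
    (hT1 : ∀ n : ℤ, T1 (eb n) = (t n)⁻¹ • eb (n + 1))
    (hXT : X.comp T1 ≠ T0.comp X)
    (hIrr0 : IsIrreducibleOp T0) (hIrr1 : IsIrreducibleOp T1)
    (hlim : ∀ i : ℤ, Tendsto
      (fun k : ℕ => ∏ m ∈ Finset.range (k + 1), ‖t (i + (m : ℤ))‖)
      atTop (nhds 0)) :
    IsIrreducibleOp (blockT T0 T1 X) := by
  have hprod (i : ℤ) : Tendsto (fun k : ℕ => ∏ m ∈ Finset.range k, ‖t (i + m)‖) atTop (𝓝 0) :=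
    (tendsto_add_atTop_iff_nat 1).mp (hlim i)
  refine isIrreducibleOp_blockT2 hIrr0 hIrr1 (fun S hS => ?_) hXT
  refine weightedShift_intertwiner_eq_zero hT0 hT1 (fun n => inv_ne_zero (ht0 n))
    (fun m n => ?_) hS
  simpa [Finset.prod_inv_distrib, div_inv_eq_mul] using (hprod n).mul (hprod m)

open Filter in
/-- Corollary 3.10: if `T₀` and `T₁` are irreducible and
`lim_{k→∞} ∏_{m=0}^{k} |t_{i+m}| = 0` for every `i`, then `T(tₙ, dₙ)` is irreducible. -/
theorem irreducibility_of_T_t_d_of_prod_tendsto_zero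
    (t : ℤ → ℂ) (ht0 : ∀ n, t n ≠ 0)
    (htb : ∃ C : ℝ, ∀ n, ‖t n‖ ≤ C) (htb' : ∃ C : ℝ, ∀ n, ‖(t n)⁻¹‖ ≤ C)
    (d : ℤ → ℂ) (hdb : ∃ C : ℝ, ∀ n, ‖d n‖ ≤ C)
    (T0 T1 X : Hl →L[ℂ] Hl)
    (hT0 : ∀ n : ℤ, T0 (eb n) = t n • eb (n + 1))
    (hT1 : ∀ n : ℤ, T1 (eb n) = (t n)⁻¹ • eb (n + 1))
    (hX : ∀ n : ℤ, X (eb n) = d n • eb n)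
    (hXT : X.comp T1 ≠ T0.comp X)
    (hIrr0 : IsIrreducibleOp T0) (hIrr1 : IsIrreducibleOp T1)
    (hlim : ∀ i : ℤ, Tendsto
      (fun k : ℕ => ∏ m ∈ Finset.range (k + 1), ‖t (i + (m : ℤ))‖)
      atTop (nhds 0)) :
    IsIrreducibleOp (blockT T0 T1 X) :=
  irreducibility_of_T_t_d_of_prod_tendsto_zero_general t ht0 T0 T1 X hT0 hT1 hXT hIrr0 hIrr1 hlim
end
end
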